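/- Let H be a σ-algebra on a set Ω, X, Y, Z Riesz spaces with Z Dedekind complete, μ : H → Y nonnegative and σ-additive, and b : X × Y → Z additive in each variable, isotone on positive cones, and transporting σ-additivity. Let (A_n)_{n∈ℕ} be pairwise disjoint members of H, (a_n) elements of X with a_n ≥ 0, and f : Ω → X the function equal to a_n on A_n for each n and equal to 0 off ⋃_n A_n. Assume the unordered-sum net F ↦ ∑_{n∈F} b(a_n, μ(A_n)) order-converges in Z to s. Then for every countable partition (B_m) of ⋃_n A_n into nonempty pairwise disjoint members of H such that every B_m is contained in some A_n, the unordered-sum net F ↦ ∑_{m∈F} b(c_m, μ(B_m)) order-converges in Z to s, where c_m is the (constant) value of f on B_m. -/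

import Mathlib

/-- A relation `r` on `C` makes `C` a directed preordered set:
reflexive, transitive, and every two elements have a common upper bound. -/
def DirectedPre {C : Type} (r : C → C → Prop) : Prop :=
  (∀ c, r c c) ∧ (∀ a b c, r a b → r b c → r a c) ∧ ∀ a b, ∃ c, r a c ∧ r b c

/-- A net `x : I → X` order-converges to `a`: there are a nonempty directed
preordered set `C`, an increasing net `z : C → X` and a decreasing net
`y : C → X` with `sup z = a = inf y`, sandwiching `x` eventually. -/
def OrderConvergesTo {X : Type*} [Preorder X] {I : Type*} [Preorder I]
    (x : I → X) (a : X) : Prop :=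
  ∃ (C : Type) (r : C → C → Prop), Nonempty C ∧ DirectedPre r ∧
    ∃ z y : C → X,
      (∀ c d, r c d → z c ≤ z d) ∧ (∀ c d, r c d → y d ≤ y c) ∧
      IsLUB (Set.range z) a ∧ IsGLB (Set.range y) a ∧
      ∀ c, ∃ i₀ : I, ∀ i, i₀ ≤ i → z c ≤ x i ∧ x i ≤ y c

/-- Dedekind completeness: every nonempty subset bounded above has a supremum. -/
def DedekindComplete (X : Type*) [Preorder X] : Prop :=
  ∀ S : Set X, S.Nonempty → BddAbove S → ∃ a, IsLUB S a

/-- A regulator (`(D)`-sequence): a double sequence, nonincreasing in the second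
index, with infimum `0` in each row. -/
def IsRegulator {X : Type*} [Preorder X] [Zero X] (a : ℕ → ℕ → X) : Prop :=
  (∀ i j, a i (j + 1) ≤ a i j) ∧ ∀ i, IsGLB (Set.range (a i)) 0

/-- `(D)`-convergence of a net to `ℓ` with respect to some regulator. -/
def DConvergesTo {X : Type*} [Lattice X] [AddCommGroup X] {I : Type*} [Preorder I]
    (x : I → X) (ℓ : X) : Prop :=
  ∃ a : ℕ → ℕ → X, IsRegulator a ∧
    ∀ φ : ℕ → ℕ, ∃ s : X, IsLUB (Set.range fun j => a j (φ j)) s ∧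
      ∃ i₀ : I, ∀ i, i₀ ≤ i → |x i - ℓ| ≤ s

/-- Weak σ-distributivity: for every regulator whose diagonal suprema all exist,
the infimum over `φ : ℕ → ℕ` of `sup_j a j (φ j)` is `0`. -/
def WeaklySigmaDistributive (X : Type*) [Lattice X] [AddCommGroup X] : Prop :=
  ∀ a : ℕ → ℕ → X, IsRegulator a →
    (∀ φ : ℕ → ℕ, ∃ s, IsLUB (Set.range fun j => a j (φ j)) s) →
    IsGLB {s | ∃ φ : ℕ → ℕ, IsLUB (Set.range fun j => a j (φ j)) s} (0 : X)

/-- `Q` refines `P`: every member of `Q` is contained in some member of `P`. -/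
def Refines {Ω : Type*} (Q P : Set (Set Ω)) : Prop :=
  ∀ s ∈ Q, ∃ t ∈ P, s ⊆ t

/-- `P` is a countable partition of `A` into nonempty pairwise disjoint
measurable sets. -/
def IsCountablePartition {Ω : Type*} [MeasurableSpace Ω]
    (A : Set Ω) (P : Set (Set Ω)) : Prop :=
  P.Countable ∧ (∀ s ∈ P, MeasurableSet s) ∧ (∀ s ∈ P, s.Nonempty) ∧
    (∀ s ∈ P, ∀ t ∈ P, s ≠ t → Disjoint s t) ∧ ⋃₀ P = A

/-- `μ` is σ-additive: for every pairwise disjoint sequence of measurable sets,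
the unordered-sum net of values order-converges to the value of the union. -/
def SigmaAdditive {Ω : Type*} [MeasurableSpace Ω]
    {Y : Type*} [Lattice Y] [AddCommGroup Y] (μ : Set Ω → Y) : Prop :=
  ∀ A : ℕ → Set Ω, (∀ n, MeasurableSet (A n)) →
    (Pairwise fun m n => Disjoint (A m) (A n)) →
    OrderConvergesTo (fun F : Finset ℕ => ∑ n ∈ F, μ (A n)) (μ (⋃ n, A n))

/-- `b` transports σ-additivity of `μ`: for every `0 ≤ x` and every pairwise
disjoint sequence of measurable sets, the unordered-sum net
`F ↦ ∑_{n∈F} b x (μ (A n))` order-converges to `b x (μ (⋃ n, A n))`. -/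
def TransportsSigmaAdditivity {Ω : Type*} [MeasurableSpace Ω]
    {X Y Z : Type*} [Preorder X] [Zero X] [Lattice Z] [AddCommGroup Z]
    (μ : Set Ω → Y) (b : X → Y → Z) : Prop :=
  ∀ x : X, 0 ≤ x → ∀ A : ℕ → Set Ω, (∀ n, MeasurableSet (A n)) →
    (Pairwise fun m n => Disjoint (A m) (A n)) →
    OrderConvergesTo (fun F : Finset ℕ => ∑ n ∈ F, b x (μ (A n)))
      (b x (μ (⋃ n, A n)))

/-- `f` is `S*`-partition integrable on `A` with integral `s`: for every choice
function there is a regulator controlling the unordered sums over all countable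
measurable partitions refining some `P₀`. -/
def SStarPartitionIntegrable {Ω : Type*} [MeasurableSpace Ω]
    {X Y Z : Type*} [Lattice Z] [AddCommGroup Z]
    (μ : Set Ω → Y) (b : X → Y → Z) (f : Ω → X) (A : Set Ω) (s : Z) : Prop :=
  ∀ δ : Set Ω → Ω, (∀ S : Set Ω, S.Nonempty → δ S ∈ S) →
    ∃ a : ℕ → ℕ → Z, IsRegulator a ∧
      ∀ φ : ℕ → ℕ, ∃ t : Z, IsLUB (Set.range fun i => a i (φ i)) t ∧
        ∃ P₀ : Set (Set Ω), IsCountablePartition A P₀ ∧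
          ∀ P : Set (Set Ω), IsCountablePartition A P → Refines P P₀ →
            ∃ SP : Z,
              OrderConvergesTo
                (fun F : {F : Finset (Set Ω) // ↑F ⊆ P} =>
                  ∑ α ∈ F.1, b (f (δ α)) (μ α)) SP ∧
              |SP - s| ≤ t



section MyOrderLemmas

variable {V : Type*} [AddCommMonoid V] [PartialOrder V]
  [CovariantClass V V (· + ·) (· ≤ ·)]

theorem my_add_le_add_right {a b : V} (h : a ≤ b) (c : V) : a + c ≤ b + c := by
  rw [add_comm a c, add_comm b c]
  exact add_le_add_right h c

theorem my_sum_le_sum {ι : Type*} {s : Finset ι} {f g : ι → V}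
    (h : ∀ i ∈ s, f i ≤ g i) : ∑ i ∈ s, f i ≤ ∑ i ∈ s, g i := by
  induction s using Finset.cons_induction with
  | empty => simp
  | cons i s hi IH =>
    rw [Finset.sum_cons, Finset.sum_cons]
    exact le_trans (my_add_le_add_right (h i (Finset.mem_cons_self i s)) _)
      (add_le_add_right (IH fun j hj => h j (Finset.mem_cons_of_mem hj)) _)

theorem my_sum_nonneg {ι : Type*} {s : Finset ι} {f : ι → V}
    (h : ∀ i ∈ s, 0 ≤ f i) : 0 ≤ ∑ i ∈ s, f i := by
  have h2 := my_sum_le_sum (f := fun _ : ι => (0 : V)) (g := f) h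
  simpa using h2

theorem my_sum_le_sum_of_subset_of_nonneg {ι : Type*} {s t : Finset ι} {f : ι → V}
    (h : s ⊆ t) (hf : ∀ i ∈ t, i ∉ s → 0 ≤ f i) :
    ∑ i ∈ s, f i ≤ ∑ i ∈ t, f i := by
  classical
  rw [← Finset.sum_sdiff h]
  calc ∑ i ∈ s, f i = 0 + ∑ i ∈ s, f i := (zero_add _).symm
    _ ≤ (∑ i ∈ t \ s, f i) + ∑ i ∈ s, f i :=
      my_add_le_add_right (my_sum_nonneg fun i hi =>
        hf i (Finset.mem_sdiff.mp hi).1 (Finset.mem_sdiff.mp hi).2) _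

end MyOrderLemmas

section MyGroupOrderLemmas

variable {V : Type*} [AddCommGroup V] [PartialOrder V]
  [CovariantClass V V (· + ·) (· ≤ ·)]

theorem my_le_of_add_le_add_left {a b c : V} (h : a + b ≤ a + c) : b ≤ c := by
  have h2 := add_le_add_right h (-a)
  rwa [neg_add_cancel_left, neg_add_cancel_left] at h2

theorem my_le_sub_iff_add_le {a b c : V} : a ≤ b - c ↔ a + c ≤ b := by
  constructor
  · intro h
    have h2 := my_add_le_add_right h c
    rwa [sub_add_cancel] at h2
  · intro h
    have h2 := my_add_le_add_right h (-c)
    rwa [add_neg_cancel_right, ← sub_eq_add_neg] at h2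

end MyGroupOrderLemmas

theorem isLUB_of_orderConvergesTo' {Z : Type*} [Preorder Z] {I : Type*} [Preorder I]
    {x : I → Z} {s : Z}
    (h : OrderConvergesTo x s)
    (hdir : ∀ i j : I, ∃ k, i ≤ k ∧ j ≤ k)
    (hmono : ∀ i j, i ≤ j → x i ≤ x j) : IsLUB (Set.range x) s := by
  obtain ⟨C, r, ⟨c0⟩, hC, z, y, hz, hy, hzs, hys, hsand⟩ := h
  constructor
  · rintro _ ⟨i, rfl⟩
    refine hys.2 ?_
    rintro _ ⟨c, rfl⟩
    obtain ⟨i₀, hi₀⟩ := hsand c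
    obtain ⟨k, hk1, hk2⟩ := hdir i i₀
    exact le_trans (hmono _ _ hk1) (hi₀ k hk2).2
  · rintro u hu
    refine hzs.2 ?_
    rintro _ ⟨c, rfl⟩
    obtain ⟨i₀, hi₀⟩ := hsand c
    exact le_trans (hi₀ i₀ le_rfl).1 (hu ⟨i₀, rfl⟩)

theorem exists_enum_of_countable {α : Type*} {P : Set (Set α)} (hc : P.Countable)
    (hP0 : (∅ : Set α) ∉ P) :
    ∃ D : ℕ → Set α,
      (∀ k, D k = ∅ ∨ D k ∈ P) ∧
      (∀ k l, D k ∈ P → D l ∈ P → D k = D l → k = l) ∧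
      (∀ β ∈ P, ∃ k, D k = β) ∧
      (∀ (M : Type*) [AddCommMonoid M] (w : Set α → M) (F : Finset (Set α)), ↑F ⊆ P →
        ∃ G : Finset ℕ, ∑ k ∈ G, w (D k) = ∑ β ∈ F, w β) := by
  classical
  haveI := hc.to_subtype
  obtain ⟨e, he⟩ := Countable.exists_injective_nat {β : Set α // β ∈ P}
  set D : ℕ → Set α := fun k =>
    if h : ∃ β : {β : Set α // β ∈ P}, e β = k then (h.choose : Set α) else ∅ with hD
  have hD1 : ∀ β : {β : Set α // β ∈ P}, D (e β) = (β : Set α) := by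
    intro β
    have hex : ∃ γ : {β : Set α // β ∈ P}, e γ = e β := ⟨β, rfl⟩
    simp only [hD]
    rw [dif_pos hex]
    exact congrArg _ (he hex.choose_spec)
  have hD2 : ∀ k, D k = ∅ ∨ D k ∈ P := by
    intro k
    simp only [hD]
    split
    · next h => exact Or.inr h.choose.2
    · exact Or.inl rfl
  have hD2' : ∀ k, D k ∈ P → ∃ β : {β : Set α // β ∈ P}, e β = k := by
    intro k hk
    by_contra h
    simp only [hD] at hk
    rw [dif_neg h] at hk
    exact hP0 hk
  have hDinj : ∀ k l, D k ∈ P → D l ∈ P → D k = D l → k = l := by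
    intro k l hk hl hkl
    obtain ⟨βk, hβk⟩ := hD2' k hk
    obtain ⟨βl, hβl⟩ := hD2' l hl
    rw [← hβk, ← hβl, hD1, hD1] at hkl
    rw [← hβk, ← hβl, Subtype.coe_injective hkl]
  refine ⟨D, hD2, hDinj, ?_, ?_⟩
  · intro β hβ
    exact ⟨e ⟨β, hβ⟩, hD1 ⟨β, hβ⟩⟩
  · intro M _ w F hF
    refine ⟨F.attach.image fun β => e ⟨β.1, hF β.2⟩, ?_⟩
    rw [Finset.sum_image (fun β _ γ _ hβγ => by
      have h2 : (⟨β.1, hF β.2⟩ : {β : Set α // β ∈ P}) = ⟨γ.1, hF γ.2⟩ := he hβγ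
      have h3 : (β.1 : Set α) = γ.1 :=
        congrArg (fun t : {β : Set α // β ∈ P} => (t : Set α)) h2
      exact Subtype.ext h3)]
    rw [Finset.sum_congr rfl fun β _ => by rw [hD1 ⟨β.1, hF β.2⟩]]
    exact Finset.sum_attach F w

/-- Partition-invariance of the elementary sum. If the
unordered sum of an elementary function over its defining family order-converges
to `s`, then over any countable measurable partition refining the family
(member-wise) it order-converges to the same `s`. -/
theorem elementary_sum_partition_invariant
    {Ω : Type*} [MeasurableSpace Ω]
    {X Y Z : Type*}
    [Lattice X] [AddCommGroup X] [CovariantClass X X (· + ·) (· ≤ ·)]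
    [Module ℝ X] [PosSMulMono ℝ X]
    [Lattice Y] [AddCommGroup Y] [CovariantClass Y Y (· + ·) (· ≤ ·)]
    [Module ℝ Y] [PosSMulMono ℝ Y]
    [Lattice Z] [AddCommGroup Z] [CovariantClass Z Z (· + ·) (· ≤ ·)]
    [Module ℝ Z] [PosSMulMono ℝ Z]
    (hded : DedekindComplete Z)
    (μ : Set Ω → Y)
    (hμ0 : ∀ A : Set Ω, MeasurableSet A → 0 ≤ μ A)
    (hμσ : SigmaAdditive μ)
    (b : X → Y → Z)
    (hb_addl : ∀ x x' y, b (x + x') y = b x y + b x' y)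
    (hb_addr : ∀ x y y', b x (y + y') = b x y + b x y')
    (hb_pos : ∀ x y, 0 ≤ x → 0 ≤ y → 0 ≤ b x y)
    (hb_mono : ∀ x x' y y', 0 ≤ x → x ≤ x' → 0 ≤ y → y ≤ y' → b x y ≤ b x' y')
    (hb_transport : TransportsSigmaAdditivity μ b)
    (A : ℕ → Set Ω) (hA : ∀ n, MeasurableSet (A n))
    (hAdisj : Pairwise fun m n => Disjoint (A m) (A n))
    (a : ℕ → X) (ha : ∀ n, 0 ≤ a n)
    (f : Ω → X)
    (hf₁ : ∀ n, ∀ ω ∈ A n, f ω = a n)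
    (hf₂ : ∀ ω, ω ∉ ⋃ n, A n → f ω = (0 : X))
    (s : Z)
    (hs : OrderConvergesTo (fun F : Finset ℕ => ∑ n ∈ F, b (a n) (μ (A n))) s) :
    ∀ P : Set (Set Ω), IsCountablePartition (⋃ n, A n) P →
      (∀ β ∈ P, ∃ n, β ⊆ A n) →
      ∀ c : Set Ω → X, (∀ β ∈ P, ∀ ω ∈ β, f ω = c β) →
        OrderConvergesTo
          (fun F : {F : Finset (Set Ω) // ↑F ⊆ P} =>
            ∑ β ∈ F.1, b (c β) (μ β)) s := by
  classical
  intro P hP hsub c hcval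
  obtain ⟨hPcount, hPmeas, hPne, hPdisj, hPU⟩ := hP
  have hdirN : ∀ i j : Finset ℕ, ∃ k, i ≤ k ∧ j ≤ k := fun i j =>
    ⟨i ⊔ j, le_sup_left, le_sup_right⟩
  -- μ ∅ = 0
  have hμempty : μ ∅ = 0 := by
    have hconv := hμσ (fun _ => ∅) (fun _ => MeasurableSet.empty)
      (fun m n _ => Set.disjoint_left.mpr (by simp))
    have hU : (⋃ _ : ℕ, (∅ : Set Ω)) = ∅ := by simp
    rw [hU] at hconv
    have hlub := isLUB_of_orderConvergesTo' hconv hdirN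
      (fun i j hij => my_sum_le_sum_of_subset_of_nonneg (Finset.le_iff_subset.mp hij)
        (fun k _ _ => hμ0 ∅ MeasurableSet.empty))
    have h2 : μ ∅ + μ ∅ ≤ μ ∅ := by
      have h3 := hlub.1 ⟨({0, 1} : Finset ℕ), rfl⟩
      simpa [Finset.sum_pair (by norm_num : (0:ℕ) ≠ 1)] using h3
    have h4 : μ ∅ + μ ∅ ≤ μ ∅ + 0 := by rwa [add_zero]
    exact le_antisymm (my_le_of_add_le_add_left h4) (hμ0 ∅ MeasurableSet.empty)
  have hb0 : ∀ x : X, b x 0 = 0 := by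
    intro x
    have h := hb_addr x 0 0
    rw [add_zero] at h
    have h2 : b x 0 + b x 0 = b x 0 + 0 := by rw [add_zero]; exact h.symm
    exact add_left_cancel h2
  -- index function
  have hidx' : ∀ β : Set Ω, ∃ n : ℕ, β ∈ P → β ⊆ A n := by
    intro β
    by_cases h : β ∈ P
    · obtain ⟨n, hn⟩ := hsub β h
      exact ⟨n, fun _ => hn⟩
    · exact ⟨0, fun h' => absurd h' h⟩
  choose idx hidx using hidx'
  have hidxu : ∀ β, β ∈ P → ∀ n, β ⊆ A n → idx β = n := by
    intro β hβ n hn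
    by_contra hne
    obtain ⟨ω, hω⟩ := hPne β hβ
    exact Set.disjoint_left.mp (hAdisj hne) (hidx β hβ hω) (hn hω)
  have hc' : ∀ β, β ∈ P → c β = a (idx β) := by
    intro β hβ
    obtain ⟨ω, hω⟩ := hPne β hβ
    rw [← hcval β hβ ω hω]
    exact hf₁ (idx β) ω (hidx β hβ hω)
  have hP0 : (∅ : Set Ω) ∉ P := fun h => (hPne ∅ h).ne_empty rfl
  obtain ⟨D, hD2, hDinj, hDsurj, hDfin⟩ := exists_enum_of_countable hPcount hP0
  -- sum conversion lemmas
  have convFG : ∀ (w : Set Ω → Z) (F : Finset (Set Ω)), ↑F ⊆ P →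
      ∃ G : Finset ℕ, ∑ k ∈ G, w (D k) = ∑ β ∈ F, w β := fun w F hF => hDfin Z w F hF
  have convGF : ∀ (w : Set Ω → Z), w ∅ = 0 → ∀ G : Finset ℕ,
      ∃ F : Finset (Set Ω), ↑F ⊆ P ∧ ∑ k ∈ G, w (D k) = ∑ β ∈ F, w β := by
    intro w hw G
    refine ⟨(G.filter fun k => D k ∈ P).image D, ?_, ?_⟩
    · intro β hβ
      simp only [Finset.coe_image, Set.mem_image, Finset.mem_coe,
        Finset.mem_filter] at hβ
      obtain ⟨k, ⟨_, hk⟩, rfl⟩ := hβ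
      exact hk
    · rw [Finset.sum_image fun k hk l hl hkl =>
        hDinj k l (Finset.mem_filter.mp hk).2 (Finset.mem_filter.mp hl).2 hkl]
      refine (Finset.sum_subset (Finset.filter_subset _ _) ?_).symm
      intro k hk hk'
      rcases hD2 k with h | h
      · rw [h, hw]
      · exact absurd (Finset.mem_filter.mpr ⟨hk, h⟩) hk'
  -- the key per-index suprema
  have key : ∀ n : ℕ, IsLUB {t : Z | ∃ F : Finset (Set Ω), ↑F ⊆ P ∧
      (∀ β ∈ F, β ⊆ A n) ∧ t = ∑ β ∈ F, b (a n) (μ β)} (b (a n) (μ (A n))) := by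
    intro n
    set B : ℕ → Set Ω := fun k => if D k ⊆ A n then D k else ∅ with hB
    have hBP : ∀ k, B k = ∅ ∨ (B k ∈ P ∧ B k = D k ∧ D k ⊆ A n) := by
      intro k
      simp only [hB]
      split
      · next h =>
        rcases hD2 k with h' | h'
        · exact Or.inl h'
        · exact Or.inr ⟨h', rfl, h⟩
      · exact Or.inl rfl
    have hBmeas : ∀ k, MeasurableSet (B k) := by
      intro k
      rcases hBP k with h | ⟨h, _, _⟩
      · rw [h]; exact MeasurableSet.empty
      · exact hPmeas _ h
    have hBdisj : Pairwise fun k l => Disjoint (B k) (B l) := by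
      intro k l hkl
      rcases hBP k with h | ⟨hk, hkD, _⟩
      · rw [h]; exact Set.empty_disjoint _
      rcases hBP l with h | ⟨hl, hlD, _⟩
      · rw [h]; exact Set.disjoint_empty _
      refine hPdisj _ hk _ hl ?_
      intro hEq
      exact hkl (hDinj k l (hkD ▸ hk) (hlD ▸ hl) (by rw [← hkD, ← hlD, hEq]))
    have hBU : (⋃ k, B k) = A n := by
      apply Set.Subset.antisymm
      · refine Set.iUnion_subset fun k => ?_
        rcases hBP k with h | ⟨_, hEq, hsubn⟩
        · rw [h]; exact Set.empty_subset _
        · rw [hEq]; exact hsubn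
      · intro ω hω
        have hω' : ω ∈ ⋃₀ P := by rw [hPU]; exact Set.mem_iUnion.mpr ⟨n, hω⟩
        obtain ⟨β, hβP, hωβ⟩ := hω'
        have hβn : β ⊆ A n := by
          have h1 := hidx β hβP
          have h2 : idx β = n := by
            by_contra hne
            exact Set.disjoint_left.mp (hAdisj hne) (h1 hωβ) hω
          rwa [h2] at h1
        obtain ⟨k, hk⟩ := hDsurj β hβP
        refine Set.mem_iUnion.mpr ⟨k, ?_⟩
        simp only [hB]
        rw [hk, if_pos hβn]
        exact hωβ
    have hconv := hb_transport (a n) (ha n) B hBmeas hBdisj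
    rw [hBU] at hconv
    have hBnonneg : ∀ k, (0:Z) ≤ b (a n) (μ (B k)) := fun k =>
      hb_pos _ _ (ha n) (hμ0 _ (hBmeas k))
    have hlub := isLUB_of_orderConvergesTo' hconv hdirN
      (fun i j hij => my_sum_le_sum_of_subset_of_nonneg (Finset.le_iff_subset.mp hij)
        (fun k _ _ => hBnonneg k))
    set wn : Set Ω → Z := fun β => if β ⊆ A n then b (a n) (μ β) else 0 with hwn
    have hterm : ∀ k, b (a n) (μ (B k)) = wn (D k) := by
      intro k
      simp only [hB, hwn]
      split_ifs with h
      · rfl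
      · rw [hμempty, hb0]
    have hwn0 : wn ∅ = 0 := by
      simp only [hwn]
      rw [if_pos (Set.empty_subset _), hμempty, hb0]
    have hrange : Set.range (fun F : Finset ℕ => ∑ k ∈ F, b (a n) (μ (B k))) =
        {t : Z | ∃ F : Finset (Set Ω), ↑F ⊆ P ∧
          (∀ β ∈ F, β ⊆ A n) ∧ t = ∑ β ∈ F, b (a n) (μ β)} := by
      apply Set.Subset.antisymm
      · rintro _ ⟨G, rfl⟩
        dsimp only
        obtain ⟨F, hFP, hFeq⟩ := convGF wn hwn0 G
        have h1 : ∑ k ∈ G, b (a n) (μ (B k)) = ∑ k ∈ G, wn (D k) :=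
          Finset.sum_congr rfl fun k _ => hterm k
        refine ⟨F.filter fun β => β ⊆ A n, ?_, ?_, ?_⟩
        · intro β hβ
          exact hFP (Finset.mem_coe.mpr (Finset.filter_subset _ _ (Finset.mem_coe.mp hβ)))
        · intro β hβ
          exact (Finset.mem_filter.mp hβ).2
        · rw [h1, hFeq]
          simp only [hwn]
          exact (Finset.sum_filter (fun β => β ⊆ A n) (fun β => b (a n) (μ β))).symm
      · rintro t ⟨F, hFP, hFsub, rfl⟩
        obtain ⟨G, hGeq⟩ := convFG wn F hFP
        refine ⟨G, ?_⟩
        dsimp only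
        have h1 : ∑ k ∈ G, b (a n) (μ (B k)) = ∑ k ∈ G, wn (D k) :=
          Finset.sum_congr rfl fun k _ => hterm k
        rw [h1, hGeq]
        exact Finset.sum_congr rfl fun β hβ => by
          simp only [hwn]; rw [if_pos (hFsub β hβ)]
    rwa [hrange] at hlub
  -- the LUB characterization of s
  have isLUB_T : IsLUB (Set.range fun G : Finset ℕ => ∑ m ∈ G, b (a m) (μ (A m))) s :=
    isLUB_of_orderConvergesTo' hs hdirN
      (fun i j hij => my_sum_le_sum_of_subset_of_nonneg (Finset.le_iff_subset.mp hij)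
        (fun m _ _ => hb_pos _ _ (ha m) (hμ0 _ (hA m))))
  have hwc0 : b (c ∅) (μ ∅) = 0 := by rw [hμempty]; exact hb0 _
  have hwcpos : ∀ β, β ∈ P → (0:Z) ≤ b (c β) (μ β) := by
    intro β hβ
    rw [hc' β hβ]
    exact hb_pos _ _ (ha _) (hμ0 _ (hPmeas β hβ))
  -- upper bound part
  have hub : ∀ F : Finset (Set Ω), ↑F ⊆ P → ∑ β ∈ F, b (c β) (μ β) ≤ s := by
    intro F hF
    have hFP : ∀ β ∈ F, β ∈ P := fun β hβ => hF (Finset.mem_coe.mpr hβ)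
    have hsplit : ∑ m ∈ F.image idx, ∑ β ∈ F.filter fun β => idx β = m,
        b (c β) (μ β) = ∑ β ∈ F, b (c β) (μ β) :=
      Finset.sum_fiberwise_of_maps_to (fun β hβ => Finset.mem_image_of_mem idx hβ) _
    rw [← hsplit]
    refine le_trans (my_sum_le_sum fun m _ => ?_)
      (isLUB_T.1 ⟨F.image idx, rfl⟩)
    have hEq : ∑ β ∈ F.filter (fun β => idx β = m), b (c β) (μ β) =
        ∑ β ∈ F.filter (fun β => idx β = m), b (a m) (μ β) := by
      refine Finset.sum_congr rfl fun β hβ => ?_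
      obtain ⟨hβF, hβm⟩ := Finset.mem_filter.mp hβ
      rw [hc' β (hFP β hβF), hβm]
    rw [hEq]
    refine (key m).1 ⟨F.filter fun β => idx β = m, ?_, ?_, rfl⟩
    · intro β hβ
      exact hFP β (Finset.filter_subset _ _ (Finset.mem_coe.mp hβ))
    · intro β hβ
      obtain ⟨hβF, hβm⟩ := Finset.mem_filter.mp hβ
      rw [← hβm]
      exact hidx β (hFP β hβF)
  -- the main LUB statement
  have hlub_main : IsLUB (Set.range fun F : {F : Finset (Set Ω) // ↑F ⊆ P} =>
      ∑ β ∈ F.1, b (c β) (μ β)) s := by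
    constructor
    · rintro _ ⟨⟨F, hF⟩, rfl⟩
      exact hub F hF
    · rintro u hu
      have hT : ∀ G : Finset ℕ, ∀ v : Z,
          (∀ F : Finset (Set Ω), ↑F ⊆ P → (∀ β ∈ F, idx β ∈ G) →
            (∑ β ∈ F, b (c β) (μ β)) + v ≤ u) →
          (∑ m ∈ G, b (a m) (μ (A m))) + v ≤ u := by
        intro G
        induction G using Finset.induction_on with
        | empty =>
          intro v hv
          simpa using hv ∅ (by simp) (by simp)
        | @insert n G hn IH =>
          intro v hv
          rw [Finset.sum_insert hn]
          have hre : b (a n) (μ (A n)) + ∑ m ∈ G, b (a m) (μ (A m)) + v =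
              (∑ m ∈ G, b (a m) (μ (A m))) + (b (a n) (μ (A n)) + v) := by abel
          rw [hre]
          refine IH _ fun F hF hFG => ?_
          have hFP : ∀ β ∈ F, β ∈ P := fun β hβ => hF (Finset.mem_coe.mpr hβ)
          have hb_le : b (a n) (μ (A n)) ≤ u - ((∑ β ∈ F, b (c β) (μ β)) + v) := by
            refine (key n).2 ?_
            rintro t ⟨F', hF'P, hF'sub, rfl⟩
            rw [my_le_sub_iff_add_le]
            have hF'P' : ∀ β ∈ F', β ∈ P := fun β hβ => hF'P (Finset.mem_coe.mpr hβ)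
            have hF'idx : ∀ β ∈ F', idx β = n := fun β hβ =>
              hidxu β (hF'P' β hβ) n (hF'sub β hβ)
            have hEq : ∑ β ∈ F', b (a n) (μ β) = ∑ β ∈ F', b (c β) (μ β) :=
              Finset.sum_congr rfl fun β hβ => by
                rw [hc' β (hF'P' β hβ), hF'idx β hβ]
            have hdisjFF : Disjoint F' F := by
              rw [Finset.disjoint_left]
              intro β hβ' hβ
              exact hn (by rw [← hF'idx β hβ']; exact hFG β hβ)
            have hsum : ∑ β ∈ F', b (c β) (μ β) + ∑ β ∈ F, b (c β) (μ β) =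
                ∑ β ∈ F' ∪ F, b (c β) (μ β) := (Finset.sum_union hdisjFF).symm
            have hgoal : (∑ β ∈ F' ∪ F, b (c β) (μ β)) + v ≤ u := by
              refine hv (F' ∪ F) ?_ ?_
              · intro β hβ
                rcases Finset.mem_union.mp (Finset.mem_coe.mp hβ) with h | h
                · exact hF'P' β h
                · exact hFP β h
              · intro β hβ
                rcases Finset.mem_union.mp hβ with h | h
                · rw [hF'idx β h]; exact Finset.mem_insert_self n G
                · exact Finset.mem_insert_of_mem (hFG β h)
            calc ∑ β ∈ F', b (a n) (μ β) + ((∑ β ∈ F, b (c β) (μ β)) + v)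
                = (∑ β ∈ F' ∪ F, b (c β) (μ β)) + v := by
                  rw [hEq, ← add_assoc, hsum]
              _ ≤ u := hgoal
          calc (∑ β ∈ F, b (c β) (μ β)) + (b (a n) (μ (A n)) + v)
              ≤ (∑ β ∈ F, b (c β) (μ β)) +
                ((u - ((∑ β ∈ F, b (c β) (μ β)) + v)) + v) :=
                add_le_add_right (my_add_le_add_right hb_le v) _
            _ = u := by abel
      have hall : ∀ G : Finset ℕ, ∑ m ∈ G, b (a m) (μ (A m)) ≤ u := by
        intro G
        have h2 := hT G 0 (fun F hF _ => by
          simpa using hu ⟨⟨F, hF⟩, rfl⟩)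
        simpa using h2
      refine isLUB_T.2 ?_
      rintro _ ⟨G, rfl⟩
      exact hall G
  -- assemble the order convergence
  have hwcD : ∀ k, (0:Z) ≤ b (c (D k)) (μ (D k)) := by
    intro k
    rcases hD2 k with h | h
    · rw [h, hμempty, hb0]
    · exact hwcpos _ h
  refine ⟨Finset ℕ, (· ⊆ ·), ⟨∅⟩,
    ⟨fun G => Finset.Subset.refl G, fun _ _ _ h1 h2 => h1.trans h2,
      fun G₁ G₂ => ⟨G₁ ∪ G₂, Finset.subset_union_left, Finset.subset_union_right⟩⟩,
    (fun G => ∑ k ∈ G, b (c (D k)) (μ (D k))), (fun _ => s), ?_, ?_, ?_, ?_, ?_⟩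
  · intro G G' h
    exact my_sum_le_sum_of_subset_of_nonneg h (fun k _ _ => hwcD k)
  · intro _ _ _
    exact le_refl s
  · have hrange2 : Set.range (fun G : Finset ℕ => ∑ k ∈ G, b (c (D k)) (μ (D k))) =
        Set.range (fun F : {F : Finset (Set Ω) // ↑F ⊆ P} =>
          ∑ β ∈ F.1, b (c β) (μ β)) := by
      apply Set.Subset.antisymm
      · rintro _ ⟨G, rfl⟩
        obtain ⟨F, hFP, hFeq⟩ := convGF (fun β => b (c β) (μ β)) hwc0 G
        exact ⟨⟨F, hFP⟩, hFeq.symm⟩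
      · rintro _ ⟨⟨F, hF⟩, rfl⟩
        obtain ⟨G, hGeq⟩ := convFG (fun β => b (c β) (μ β)) F hF
        exact ⟨G, hGeq⟩
    rw [hrange2]
    exact hlub_main
  · rw [Set.range_const]
    exact isGLB_singleton
  · intro G
    obtain ⟨F₀, hF₀P, hEq⟩ := convGF (fun β => b (c β) (μ β)) hwc0 G
    refine ⟨⟨F₀, hF₀P⟩, fun F hle => ⟨?_, hub F.1 F.2⟩⟩
    dsimp only
    rw [hEq]
    exact my_sum_le_sum_of_subset_of_nonneg hle
      (fun β hβ _ => hwcpos β (F.2 (Finset.mem_coe.mpr hβ)))
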